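/- arXiv:0905.4444 — 4 statements merged into one kernel-verified Lean document; each statement's English description precedes it below -/
import Mathlib

section
/- (Limited Loss Theorem) For any instance of the traveling repairman problem with unit-length time windows, if R* is an optimal service run with respect to untrimmed requests, then there exists a service run R with respect to trimmed requests such that π(R) ≥ (1/3)·π(R*). Here a service run feasible for untrimmed windows can be shifted by +0.5 or −0.5 in time and remains a geometrically feasible run. -/
/-!
Every point of a unit window `[t, t + 1)` lies in its trimmed window after a shift by `0`,
`+1/2` or `-1/2`: the half-period `[k/2, (k+1)/2)` with `k = ⌈2t⌉` fits in the window and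
every point of the window is within half a period of it. Each request served by `f` is thus
served on its trimmed window by one of the three shifted runs `y ↦ f (y - s)`, which are
as fast as `f`, and by pigeonhole one of them serves at least a third of the requests.
-/

/-- The trimmed window of a unit time window `[t, t+1)`: the union of all periods
`[k/2, (k+1)/2)` wholly contained in the window (a unique one, when `t` is not a
half-integer). -/
def trimmedWindow (t : ℝ) : Set ℝ :=
  {x | ∃ k : ℤ, x ∈ Set.Ico ((k : ℝ) / 2) (((k : ℝ) + 1) / 2) ∧
      Set.Ico ((k : ℝ) / 2) (((k : ℝ) + 1) / 2) ⊆ Set.Ico t (t + 1)}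

open Set

theorem Ico_ceil_two_mul_subset_Ico (t : ℝ) :
    Ico ((⌈2 * t⌉ : ℝ) / 2) (((⌈2 * t⌉ : ℝ) + 1) / 2) ⊆ Ico t (t + 1) := by
  have hle := Int.le_ceil (2 * t)
  have hlt := Int.ceil_lt_add_one (2 * t)
  rintro y ⟨hy₁, hy₂⟩
  constructor <;> linarith

theorem exists_add_mem_trimmedWindow {t x : ℝ} (hx : x ∈ Ico t (t + 1)) :
    ∃ s ∈ ({0, 1 / 2, -(1 / 2)} : Finset ℝ), x + s ∈ trimmedWindow t := by
  obtain ⟨hx₁, hx₂⟩ := hx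
  set k := ⌈2 * t⌉
  have hle : 2 * t ≤ k := Int.le_ceil _
  have hlt : (k : ℝ) < 2 * t + 1 := Int.ceil_lt_add_one _
  have hmem : ∀ y, y ∈ Ico ((k : ℝ) / 2) (((k : ℝ) + 1) / 2) → y ∈ trimmedWindow t :=
    fun y hy => ⟨k, hy, Ico_ceil_two_mul_subset_Ico t⟩
  rcases lt_or_ge x ((k : ℝ) / 2) with hxk | hxk
  · exact ⟨1 / 2, by simp, hmem _ ⟨by linarith, by linarith⟩⟩
  rcases lt_or_ge x (((k : ℝ) + 1) / 2) with hxk' | hxk'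
  · exact ⟨0, by simp, hmem _ ⟨by linarith, by linarith⟩⟩
  · exact ⟨-(1 / 2), by simp, hmem _ ⟨by linarith, by linarith⟩⟩

theorem exists_ncard_le_card_mul_ncard_of_subset_biUnion {ι α : Type*} {S : Set ι}
    {A : Finset α} {T : α → Set ι} (hA : A.Nonempty) (hT : ∀ a ∈ A, (T a).Finite)
    (hS : S ⊆ ⋃ a ∈ A, T a) : ∃ a ∈ A, S.ncard ≤ A.card * (T a).ncard := by
  obtain ⟨a, ha, hmax⟩ := A.exists_max_image (fun a => (T a).ncard) hA
  refine ⟨a, ha, ?_⟩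
  calc S.ncard ≤ (⋃ a ∈ A, T a).ncard :=
        ncard_le_ncard hS (A.finite_toSet.biUnion hT)
    _ ≤ ∑ a ∈ A, (T a).ncard := A.set_ncard_biUnion_le T
    _ ≤ A.card * (T a).ncard := A.sum_le_card_nsmul _ _ hmax

theorem LipschitzWith.comp_sub_right {M : Type*} [PseudoEMetricSpace M] {σ : NNReal}
    {f : ℝ → M} (hf : LipschitzWith σ f) (s : ℝ) : LipschitzWith σ (fun y => f (y - s)) := by
  simpa [Function.comp_def] using hf.comp (IsometryEquiv.subRight s).isometry.lipschitz

theorem stmt2_general {M ι : Type*} [MetricSpace M] (σ : NNReal)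
    (req : Finset ι) (loc : ι → M) (start : ι → ℝ)
    (f : ℝ → M) (hf : LipschitzWith σ f) :
    ∃ g : ℝ → M, LipschitzWith σ g ∧
      ((Set.ncard {r | r ∈ req ∧ ∃ x ∈ Set.Ico (start r) (start r + 1), f x = loc r} : ℝ) / 3
        ≤ (Set.ncard {r | r ∈ req ∧ ∃ x ∈ trimmedWindow (start r), g x = loc r} : ℝ)) := by
  set T : ℝ → Set ι := fun s => {r | r ∈ req ∧ ∃ x ∈ trimmedWindow (start r), f (x - s) = loc r}
  have hcover : {r | r ∈ req ∧ ∃ x ∈ Ico (start r) (start r + 1), f x = loc r} ⊆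
      ⋃ s ∈ ({0, 1 / 2, -(1 / 2)} : Finset ℝ), T s := by
    rintro r ⟨hr, x, hx, hfx⟩
    obtain ⟨s, hs, hxs⟩ := exists_add_mem_trimmedWindow hx
    exact mem_biUnion hs ⟨hr, x + s, hxs, by simpa using hfx⟩
  obtain ⟨s, -, hs⟩ := exists_ncard_le_card_mul_ncard_of_subset_biUnion ⟨0, by simp⟩
    (fun s _ => req.finite_toSet.subset fun r hr => hr.1) hcover
  have hcard : ({0, 1 / 2, -(1 / 2)} : Finset ℝ).card = 3 := by norm_num
  refine ⟨fun y => f (y - s), hf.comp_sub_right s, ?_⟩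
  rw [hcard] at hs
  rw [div_le_iff₀ three_pos]
  exact_mod_cast hs.trans_eq (mul_comm _ _)

/-- Limited Loss Theorem: for any instance of the repairman problem with unit time
windows, given an optimal (indeed, any) service run `f` with respect to untrimmed
windows (a speed-`σ` time-parameterized path, i.e. a `σ`-Lipschitz map into the metric
space), there is a service run `g` of the same speed whose profit with respect to
trimmed windows is at least one third of the profit of `f` on untrimmed windows. -/
theorem stmt2 {M ι : Type*} [MetricSpace M] (σ : NNReal)
    (req : Finset ι) (loc : ι → M) (start : ι → ℝ)
    (hpos : ∀ r, 0 < start r) (hhalf : ∀ r, ∀ k : ℤ, start r ≠ (k : ℝ) / 2)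
    (f : ℝ → M) (hf : LipschitzWith σ f) :
    ∃ g : ℝ → M, LipschitzWith σ g ∧
      ((Set.ncard {r | r ∈ req ∧ ∃ x ∈ Set.Ico (start r) (start r + 1), f x = loc r} : ℝ) / 3
        ≤ (Set.ncard {r | r ∈ req ∧ ∃ x ∈ trimmedWindow (start r), g x = loc r} : ℝ)) :=
  stmt2_general σ req loc start f hf
end

section
/- In a weighted tree, for fixed nodes s and t and any target profit p, the minimum-length walk from s to t visiting nodes of total profit at least p equals d(s,t) plus the minimum, over choices of subtrees branching off the direct s–t path, of twice the total edge weight of the chosen subtree portions whose node profits sum (together with the direct path's profit) to at least p. -/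
open scoped Classical

/-!
In a forest every edge `e` is a bridge, so a walk from `u` to `v` crosses `e` an even number of
times exactly when `u` and `v` stay connected after deleting `e`. Hence a walk `W` from `s` to
`t` crosses each edge of the path `P` from `s` to `t` at least once and every other edge it uses
at least twice, so its length is at least `len P + 2 w(E')` for the set `E'` of edges of `W`
off `P`, and `E'` is one of the competing edge sets. Conversely, the vertices reachable from `P`
through a competing `E'` are all visited by inserting into `P` one back-and-forth detour
`u → v → u` per edge `s(u, v)` of `E'`, each attached at an endpoint already visited; this walk
has length at most `len P + 2 w(E')`.
-/

theorem csInf_eq_add_csInf_of_forall {A B : Set ℝ} (c : ℝ) (hA : A.Nonempty) (hB : BddBelow B)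
    (hAB : ∀ a ∈ A, ∃ b ∈ B, c + b ≤ a) (hBA : ∀ b ∈ B, ∃ a ∈ A, a ≤ c + b) :
    sInf A = c + sInf B := by
  obtain ⟨a₀, ha₀⟩ := hA
  obtain ⟨b₀, hb₀, -⟩ := hAB a₀ ha₀
  obtain ⟨m, hm⟩ := hB
  have hA_bdd : BddBelow A := ⟨c + m, fun a ha => by
    obtain ⟨b, hb, hba⟩ := hAB a ha
    linarith [hm hb]⟩
  apply le_antisymm
  · rw [← sub_le_iff_le_add']
    refine le_csInf ⟨b₀, hb₀⟩ fun b hb => ?_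
    obtain ⟨a, ha, hab⟩ := hBA b hb
    linarith [csInf_le hA_bdd ha]
  · refine le_csInf ⟨a₀, ha₀⟩ fun a ha => ?_
    obtain ⟨b, hb, hba⟩ := hAB a ha
    linarith [csInf_le ⟨m, hm⟩ hb]

namespace SimpleGraph

variable {V : Type*} {G : SimpleGraph V}

theorem Reachable.of_adj_invariant {Q : V → Prop} (hQ : ∀ ⦃a b⦄, G.Adj a b → Q a → Q b)
    {u v : V} (h : G.Reachable u v) (hu : Q u) : Q v := by
  rw [reachable_iff_reflTransGen] at h
  induction h with
  | refl => exact hu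
  | tail _ hab ih => exact hQ hab ih

theorem exists_reachable_fromEdgeSet_of_subset_union {S : Set V} {E F D : Set (Sym2 V)}
    (hE : E ⊆ F ∪ D) (hD : ∀ d ∈ D, ∀ z ∈ d, z ∈ S) {y x : V} (hy : y ∈ S)
    (h : (fromEdgeSet E).Reachable y x) : ∃ y' ∈ S, (fromEdgeSet F).Reachable y' x := by
  refine h.of_adj_invariant (Q := fun z => ∃ y' ∈ S, (fromEdgeSet F).Reachable y' z) ?_
    ⟨y, hy, .rfl⟩
  rintro a b hab ⟨y', hy', hr⟩
  rw [fromEdgeSet_adj] at hab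
  rcases hE hab.1 with hF | hD'
  · exact ⟨y', hy', hr.trans ((fromEdgeSet_adj _).mpr ⟨hF, hab.2⟩).reachable⟩
  · exact ⟨b, hD _ hD' b (Sym2.mem_mk_right a b), .rfl⟩

theorem Walk.reachable_fromEdgeSet_of_mem_support {E : Set (Sym2 V)} {u v x : V}
    (W : G.Walk u v) (hW : ∀ e ∈ W.edges, e ∈ E) (hx : x ∈ W.support) :
    (fromEdgeSet E).Reachable u x := by
  let W' := W.transfer (fromEdgeSet E) fun e he => by
    rw [edgeSet_fromEdgeSet]
    exact ⟨hW e he, G.not_isDiag_of_mem_edgeSet (W.edges_subset_edgeSet he)⟩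
  exact ⟨W'.takeUntil x (by rwa [Walk.support_transfer])⟩

theorem Walk.exists_detour {s t u v : V} (W : G.Walk s t) (hu : u ∈ W.support)
    (huv : G.Adj u v) :
    ∃ W' : G.Walk s t, v ∈ W'.support ∧ W.support ⊆ W'.support ∧
      W'.edges.Perm (s(u, v) :: s(u, v) :: W.edges) := by
  obtain ⟨W₁, W₂, rfl⟩ := Walk.mem_support_iff_exists_append.mp hu
  refine ⟨W₁.append (.cons huv (.cons huv.symm W₂)), ?_, ?_, ?_⟩
  · simp [Walk.mem_support_append_iff]
  · intro x hx
    simp only [Walk.mem_support_append_iff, Walk.support_cons, List.mem_cons] at hx ⊢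
    tauto
  · rw [Walk.edges_append, Walk.edges_append, Walk.edges_cons, Walk.edges_cons, Sym2.eq_swap]
    exact List.perm_middle.trans (List.perm_middle.cons _)

theorem Reachable.deleteEdges_reachable_or {y z x : V} (h : G.Reachable z x) :
    (G.deleteEdges {s(y, z)}).Reachable y x ∨ (G.deleteEdges {s(y, z)}).Reachable z x := by
  refine h.of_adj_invariant (Q := fun x => (G.deleteEdges {s(y, z)}).Reachable y x ∨
    (G.deleteEdges {s(y, z)}).Reachable z x) ?_ (.inr .rfl)
  intro a b hab ha
  by_cases he : s(a, b) = s(y, z)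
  · rcases Sym2.mem_iff.mp (he ▸ Sym2.mem_mk_right a b) with rfl | rfl
    exacts [.inl .rfl, .inr .rfl]
  · have hab' : (G.deleteEdges {s(y, z)}).Adj a b := by simp [hab, he]
    exact ha.imp (·.trans hab'.reachable) (·.trans hab'.reachable)

theorem IsBridge.reachable_deleteEdges_iff_not {y z x : V} (hb : G.IsBridge s(y, z))
    (h : G.Reachable z x) :
    (G.deleteEdges {s(y, z)}).Reachable y x ↔ ¬ (G.deleteEdges {s(y, z)}).Reachable z x :=
  ⟨fun hy hz => isBridge_iff.mp hb (hy.trans hz.symm), h.deleteEdges_reachable_or.resolve_right⟩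

theorem IsBridge.even_count_edges_iff {e : Sym2 V} (hb : G.IsBridge e) {u v : V}
    (W : G.Walk u v) : Even (W.edges.count e) ↔ (G.deleteEdges {e}).Reachable u v := by
  induction W with
  | nil => simp
  | @cons y z x h W ih =>
    rw [Walk.edges_cons, List.count_cons]
    by_cases he : s(y, z) = e
    · subst he
      simp only [beq_self_eq_true, if_true, Nat.even_add_one, ih]
      exact (hb.reachable_deleteEdges_iff_not W.reachable).symm
    · have hyz : (G.deleteEdges {e}).Adj y z := by simp [h, he]
      simp only [beq_iff_eq, he, if_false, add_zero, ih]
      exact ⟨hyz.reachable.trans, hyz.symm.reachable.trans⟩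

theorem IsAcyclic.even_count_edges_iff (hG : G.IsAcyclic) {s t : V} {P : G.Walk s t}
    (hP : P.IsPath) (W : G.Walk s t) {e : Sym2 V} (he : e ∈ G.edgeSet) :
    Even (W.edges.count e) ↔ e ∉ P.edges := by
  have hb := isAcyclic_iff_forall_isBridge.mp hG he
  rw [hb.even_count_edges_iff W, ← hb.even_count_edges_iff P]
  by_cases heP : e ∈ P.edges
  · simp [List.count_eq_one_of_mem hP.isTrail.edges_nodup heP, heP]
  · simp [List.count_eq_zero_of_not_mem heP, heP]

theorem IsAcyclic.sum_edges_add_two_mul_le (hG : G.IsAcyclic) {s t : V} {P : G.Walk s t}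
    (hP : P.IsPath) (W : G.Walk s t) {w : Sym2 V → ℝ} (hw : ∀ e, 0 ≤ w e) :
    (P.edges.map w).sum + 2 * ∑ e ∈ W.edges.toFinset \ P.edges.toFinset, w e ≤
      (W.edges.map w).sum := by
  have hP_odd : ∀ e ∈ P.edges, Odd (W.edges.count e) := fun e he =>
    Nat.not_even_iff_odd.mp fun h =>
      (hG.even_count_edges_iff hP W (P.edges_subset_edgeSet he)).mp h he
  have hsub : P.edges.toFinset ⊆ W.edges.toFinset := fun e he => by
    rw [List.mem_toFinset] at he ⊢
    exact List.count_pos_iff.mp (hP_odd e he).pos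
  calc (P.edges.map w).sum + 2 * ∑ e ∈ W.edges.toFinset \ P.edges.toFinset, w e
      = ∑ e ∈ P.edges.toFinset, w e +
          ∑ e ∈ W.edges.toFinset \ P.edges.toFinset, 2 * w e := by
        rw [List.sum_toFinset w hP.isTrail.edges_nodup, Finset.mul_sum]
    _ ≤ ∑ e ∈ P.edges.toFinset, W.edges.count e • w e +
          ∑ e ∈ W.edges.toFinset \ P.edges.toFinset, W.edges.count e • w e := by
        gcongr with e he e he
        · rw [nsmul_eq_mul]
          exact le_mul_of_one_le_left (hw e) (by exact_mod_cast (hP_odd e (by simpa using he)).pos)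
        · obtain ⟨heW, heP⟩ : e ∈ W.edges ∧ e ∉ P.edges := by simpa using he
          have hev := (hG.even_count_edges_iff hP W (W.edges_subset_edgeSet heW)).mpr heP
          have hpos := List.count_pos_iff.mpr heW
          rw [nsmul_eq_mul]
          gcongr
          · exact hw e
          · obtain ⟨k, hk⟩ := hev
            exact_mod_cast (by omega : 2 ≤ W.edges.count e)
    _ = (W.edges.map w).sum := by
        rw [add_comm, Finset.sum_sdiff hsub, Finset.sum_list_map_count]

theorem Walk.reachable_fromEdgeSet_edges_sdiff_union {s t x : V} (W P : G.Walk s t)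
    (hx : ∃ e ∈ W.edges.toFinset \ P.edges.toFinset, x ∈ e) :
    (fromEdgeSet (↑(W.edges.toFinset \ P.edges.toFinset) ∪ {e | e ∈ P.edges})).Reachable
      s x := by
  obtain ⟨e, he, hxe⟩ := hx
  have heW : e ∈ W.edges := by simpa using (Finset.mem_sdiff.mp he).1
  refine W.reachable_fromEdgeSet_of_mem_support (fun f hf => ?_)
    (Walk.mem_support_of_mem_edges heW hxe)
  by_cases hfP : f ∈ P.edges <;> simp [hf, hfP]

theorem exists_walk_cover_fromEdgeSet {w : Sym2 V → ℝ} (hw : ∀ e, 0 ≤ w e)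
    (F : Finset (Sym2 V)) (hF : ↑F ⊆ G.edgeSet) {s t : V} (W : G.Walk s t) :
    ∃ W' : G.Walk s t,
      (∀ x, (∃ y ∈ W.support, (fromEdgeSet (F : Set (Sym2 V))).Reachable y x) →
        x ∈ W'.support) ∧
      (W'.edges.map w).sum ≤ (W.edges.map w).sum + 2 * ∑ e ∈ F, w e := by
  induction F using Finset.strongInduction generalizing W with
  | H F ih =>
  by_cases hout : ∃ u v, s(u, v) ∈ F ∧ u ∈ W.support
  · obtain ⟨u, v, he, hu⟩ := hout
    obtain ⟨W₁, hv, hsupp, hperm⟩ := W.exists_detour hu (hF he)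
    obtain ⟨W', hcover, hlen⟩ := ih (F.erase s(u, v)) (Finset.erase_ssubset he)
      ((Finset.coe_subset.mpr (F.erase_subset _)).trans hF) W₁
    refine ⟨W', fun x ⟨y, hy, hyx⟩ => hcover x ?_, ?_⟩
    · refine exists_reachable_fromEdgeSet_of_subset_union (D := {s(u, v)}) ?_ ?_ (hsupp hy) hyx
      · intro f hf
        by_cases hfe : f = s(u, v)
        · exact .inr hfe
        · exact .inl (by simpa [hfe] using hf)
      · rintro d rfl z hz
        rcases Sym2.mem_iff.mp hz with rfl | rfl
        exacts [hsupp hu, hv]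
    · calc (W'.edges.map w).sum
          ≤ (W₁.edges.map w).sum + 2 * ∑ e ∈ F.erase s(u, v), w e := hlen
        _ = (W.edges.map w).sum + 2 * ∑ e ∈ F, w e := by
          rw [(hperm.map w).sum_eq, ← Finset.add_sum_erase F w he]
          simp only [List.map_cons, List.sum_cons]
          ring
  · simp only [not_exists, not_and] at hout
    refine ⟨W, fun x ⟨y, hy, hyx⟩ => hyx.of_adj_invariant ?_ hy, ?_⟩
    · intro a _ hab ha
      exact absurd ha (hout a _ ((fromEdgeSet_adj _).mp hab).1)
    · have := Finset.sum_nonneg fun e (_ : e ∈ F) => hw e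
      linarith

section Fintype

variable [Fintype V]

theorem Walk.support_subset_filter_support_or_mem_edges_sdiff {s t : V} (W P : G.Walk s t) :
    W.support.toFinset ⊆ Finset.univ.filter
      (fun x => x ∈ P.support ∨ ∃ e ∈ W.edges.toFinset \ P.edges.toFinset, x ∈ e) := by
  intro x hx
  rw [List.mem_toFinset, Walk.mem_support_iff_exists_mem_edges] at hx
  rw [Finset.mem_filter]
  refine ⟨Finset.mem_univ x, ?_⟩
  rcases hx with rfl | ⟨e, he, hxe⟩
  · exact .inl P.end_mem_support
  · by_cases heP : e ∈ P.edges
    · exact .inl (Walk.mem_support_of_mem_edges heP hxe)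
    · exact .inr ⟨e, by simp [he, heP], hxe⟩

theorem exists_walk_support_superset_filter {w : Sym2 V → ℝ} (hw : ∀ e, 0 ≤ w e) {s t : V}
    (P : G.Walk s t) (E' : Finset (Sym2 V)) (hE' : ↑E' ⊆ G.edgeSet)
    (hreach : ∀ x : V, (∃ e ∈ E', x ∈ e) →
      (fromEdgeSet (↑E' ∪ {e | e ∈ P.edges})).Reachable s x) :
    ∃ W : G.Walk s t,
      Finset.univ.filter (fun x => x ∈ P.support ∨ ∃ e ∈ E', x ∈ e) ⊆
        W.support.toFinset ∧
      (W.edges.map w).sum ≤ (P.edges.map w).sum + 2 * ∑ e ∈ E', w e := by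
  obtain ⟨W, hcover, hlen⟩ := exists_walk_cover_fromEdgeSet hw E' hE' P
  refine ⟨W, fun x hx => List.mem_toFinset.mpr (hcover x ?_), hlen⟩
  rcases (Finset.mem_filter.mp hx).2 with hxP | hxE
  · exact ⟨x, hxP, .rfl⟩
  · exact exists_reachable_fromEdgeSet_of_subset_union subset_rfl
      (fun d hd z hz => Walk.mem_support_of_mem_edges hd hz) P.start_mem_support (hreach x hxE)

end Fintype

end SimpleGraph

theorem stmt5_general {V : Type*} [Fintype V] (G : SimpleGraph V)
    (hT : G.IsAcyclic)
    (w : Sym2 V → ℝ) (hw : ∀ e, 0 ≤ w e) (π : V → ℕ) (s t : V) (p : ℕ)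
    (P : G.Walk s t) (hP : P.IsPath)
    (hex : ∃ W : G.Walk s t, p ≤ ∑ v ∈ W.support.toFinset, π v) :
    sInf {L : ℝ | ∃ W : G.Walk s t,
        p ≤ ∑ v ∈ W.support.toFinset, π v ∧ L = (W.edges.map w).sum} =
      (P.edges.map w).sum +
      sInf {L : ℝ | ∃ E' : Finset (Sym2 V),
        (↑E' ⊆ G.edgeSet \ {e | e ∈ P.edges}) ∧
        (∀ x : V, (∃ e ∈ E', x ∈ e) →
          (SimpleGraph.fromEdgeSet (↑E' ∪ {e | e ∈ P.edges})).Reachable s x) ∧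
        p ≤ ∑ v ∈ Finset.univ.filter
              (fun x => x ∈ P.support ∨ ∃ e ∈ E', x ∈ e), π v ∧
        L = 2 * ∑ e ∈ E', w e} := by
  refine csInf_eq_add_csInf_of_forall _ ?_ ⟨0, ?_⟩ ?_ ?_
  · obtain ⟨W, hW⟩ := hex
    exact ⟨_, W, hW, rfl⟩
  · rintro _ ⟨E', -, -, -, rfl⟩
    have := Finset.sum_nonneg fun e (_ : e ∈ E') => hw e
    linarith
  · rintro _ ⟨W, hWp, rfl⟩
    refine ⟨_, ⟨W.edges.toFinset \ P.edges.toFinset, fun e he => ?_,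
      fun x hx => W.reachable_fromEdgeSet_edges_sdiff_union P hx,
      hWp.trans (Finset.sum_le_sum_of_subset
        (W.support_subset_filter_support_or_mem_edges_sdiff P)), rfl⟩,
      hT.sum_edges_add_two_mul_le hP W hw⟩
    obtain ⟨heW, heP⟩ : e ∈ W.edges ∧ e ∉ P.edges := by simpa using he
    exact ⟨W.edges_subset_edgeSet heW, heP⟩
  · rintro _ ⟨E', hE'G, hE'reach, hE'p, rfl⟩
    obtain ⟨W, hsupp, hlen⟩ := SimpleGraph.exists_walk_support_superset_filter hw P E'
      (fun e he => (hE'G he).1) hE'reach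
    exact ⟨_, ⟨W, hE'p.trans (Finset.sum_le_sum_of_subset hsupp), rfl⟩, hlen⟩

/-- In a weighted tree, for fixed nodes `s`, `t` and any target profit `p`, the minimum
length of a walk from `s` to `t` collecting profit at least `p` equals `d(s,t)` (the
length of the unique `s`–`t` path `P`) plus the minimum, over edge sets `E'` of subtrees
branching off the direct path (edges not on `P`, forming together with `P` a connected
subgraph reachable from `s`) whose node profits together with the direct path's profit
sum to at least `p`, of twice the total weight of `E'`. -/
theorem stmt5 {V : Type*} [Fintype V] (G : SimpleGraph V)
    (hG : G.Connected) (hT : G.IsAcyclic)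
    (w : Sym2 V → ℝ) (hw : ∀ e, 0 ≤ w e) (π : V → ℕ) (s t : V) (p : ℕ)
    (P : G.Walk s t) (hP : P.IsPath)
    (hex : ∃ W : G.Walk s t, p ≤ ∑ v ∈ W.support.toFinset, π v) :
    sInf {L : ℝ | ∃ W : G.Walk s t,
        p ≤ ∑ v ∈ W.support.toFinset, π v ∧ L = (W.edges.map w).sum} =
      (P.edges.map w).sum +
      sInf {L : ℝ | ∃ E' : Finset (Sym2 V),
        (↑E' ⊆ G.edgeSet \ {e | e ∈ P.edges}) ∧
        (∀ x : V, (∃ e ∈ E', x ∈ e) →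
          (SimpleGraph.fromEdgeSet (↑E' ∪ {e | e ∈ P.edges})).Reachable s x) ∧
        p ≤ ∑ v ∈ Finset.univ.filter
              (fun x => x ∈ P.support ∨ ∃ e ∈ E', x ∈ e), π v ∧
        L = 2 * ∑ e ∈ E', w e} :=
  stmt5_general G hT w hw π s t p P hP hex
end

section
/- (NP-hardness gadget correctness) In the tree constructed from a multiset A of positive integers with sum 2K — central node u; for each a ∈ A a leaf connected to u by an edge of cost a; start node s and end node t each connected to u by edges of cost 6K; midpoint node v connected to u by an edge of cost K; with requests at s on window [0,6K], at t on [12K,18K], at u and at every integer-leaf on [6K,12K], and at v on both [3K,9K] and [9K,15K] — there exists a unit-speed tour servicing all requests within their windows if and only if A can be partitioned into two sub-multisets each summing to K. -/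
/-- The nodes of the NP-hardness gadget tree: start `s`, end `t`, central node `u`,
midpoint `v`, and one leaf per element of the multiset. -/
inductive GadgetNode (n : ℕ) where
  | s : GadgetNode n
  | t : GadgetNode n
  | u : GadgetNode n
  | v : GadgetNode n
  | leaf : Fin n → GadgetNode n
  deriving DecidableEq

/-- Distance from the central node `u` in the gadget tree: `s` and `t` are at distance
`6K`, `v` at distance `K`, and the leaf for integer `A i` at distance `A i`. -/
def distToCenter {n : ℕ} (K : ℕ) (A : Fin n → ℕ) : GadgetNode n → ℝ
  | .s => 6 * K
  | .t => 6 * K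
  | .u => 0
  | .v => K
  | .leaf i => A i

/-- The tree metric of the gadget (a star centered at `u`). -/
def gadgetDist {n : ℕ} (K : ℕ) (A : Fin n → ℕ) (x y : GadgetNode n) : ℝ :=
  if x = y then 0 else distToCenter K A x + distToCenter K A y

/-! In the star metric, a walk between two non-leaf nodes that visits a set `S` of leaves in
between travels at least the two endpoint radii plus twice the total edge cost of `S`. Cut a
feasible tour at its two visits of `v` (swapped if necessary, which forces both to happen at
time `9K`): the leaves seen before the first cost at most `K` (from `s` at time `≥ 0` to `v` at
time `≤ 9K`), those seen after the second at most `K` (from `v` at time `≥ 9K` to `t` at time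
`≤ 18K`), and a leaf in between would push the travel time from `s` to `t` to `20K > 18K`.
Conversely, a partition `P, Pᶜ` is served by the tour `s, u, P, v, Pᶜ, u, t` that visits `P`
during `[6K, 8K]`, `v` at `9K` and `Pᶜ` during `[10K, 12K]`. -/

section TimedWalk

variable {α : Type*} {d : α → α → ℝ} {N : ℕ} {node : Fin (N + 1) → α} {time : Fin (N + 1) → ℝ}

def IsTimedWalk (d : α → α → ℝ) (node : Fin (N + 1) → α) (time : Fin (N + 1) → ℝ) : Prop :=
  ∀ k : Fin N, d (node k.castSucc) (node k.succ) ≤ time k.succ - time k.castSucc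

def TimedStep (d : α → α → ℝ) (p q : α × ℝ) : Prop :=
  d p.1 q.1 ≤ q.2 - p.2

theorem IsTimedWalk.dist_le (hself : ∀ x, d x x = 0) (htri : ∀ x y z, d x z ≤ d x y + d y z)
    (hwalk : IsTimedWalk d node time) {j k : Fin (N + 1)} (hjk : j ≤ k) :
    d (node j) (node k) ≤ time k - time j := by
  induction k using Fin.induction with
  | zero =>
    obtain rfl : j = 0 := Fin.le_zero_iff.mp hjk
    simp [hself]
  | succ i ih =>
    rcases hjk.eq_or_lt with rfl | hlt
    · simp [hself]
    calc d (node j) (node i.succ)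
        ≤ d (node j) (node i.castSucc) + d (node i.castSucc) (node i.succ) := htri _ _ _
      _ ≤ (time i.castSucc - time j) + (time i.succ - time i.castSucc) :=
          add_le_add (ih (Fin.le_castSucc_iff.mpr hlt)) (hwalk i)
      _ = time i.succ - time j := by ring

theorem exists_isTimedWalk_of_isChain {l : List (α × ℝ)} (hne : l ≠ [])
    (hchain : l.IsChain (TimedStep d)) :
    ∃ (N : ℕ) (node : Fin (N + 1) → α) (time : Fin (N + 1) → ℝ),
      IsTimedWalk d node time ∧ ∀ p ∈ l, ∃ k, node k = p.1 ∧ time k = p.2 := by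
  have hlen : l.length - 1 + 1 = l.length := Nat.sub_add_cancel (List.length_pos_iff.mpr hne)
  refine ⟨l.length - 1, fun k => (l.get (k.cast hlen)).1, fun k => (l.get (k.cast hlen)).2,
    fun k => List.isChain_iff_getElem.mp hchain k (by omega), fun p hp => ?_⟩
  obtain ⟨m, rfl⟩ := List.mem_iff_get.mp hp
  exact ⟨m.cast hlen.symm, rfl, rfl⟩

end TimedWalk

section GadgetMetric

variable {n : ℕ} {K : ℕ} {A : Fin n → ℕ}

theorem distToCenter_nonneg (x : GadgetNode n) : 0 ≤ distToCenter K A x := by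
  cases x <;> simp [distToCenter]

@[simp]
theorem gadgetDist_self (x : GadgetNode n) : gadgetDist K A x x = 0 := by
  simp [gadgetDist]

theorem gadgetDist_of_ne {x y : GadgetNode n} (h : x ≠ y) :
    gadgetDist K A x y = distToCenter K A x + distToCenter K A y := by
  simp [gadgetDist, h]

theorem gadgetDist_nonneg (x y : GadgetNode n) : 0 ≤ gadgetDist K A x y := by
  unfold gadgetDist
  split_ifs
  exacts [le_rfl, add_nonneg (distToCenter_nonneg x) (distToCenter_nonneg y)]

theorem gadgetDist_add_two_mul_le {x y z : GadgetNode n} (hx : x ≠ z) (hy : y ≠ z) :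
    gadgetDist K A x y + 2 * distToCenter K A z ≤ gadgetDist K A x z + gadgetDist K A z y := by
  rw [gadgetDist_of_ne hx, gadgetDist_of_ne hy.symm]
  unfold gadgetDist
  split_ifs
  · linarith [distToCenter_nonneg (K := K) (A := A) x, distToCenter_nonneg (K := K) (A := A) y]
  · linarith

theorem gadgetDist_triangle (x y z : GadgetNode n) :
    gadgetDist K A x z ≤ gadgetDist K A x y + gadgetDist K A y z := by
  rcases eq_or_ne x y with rfl | hxy
  · simp
  rcases eq_or_ne z y with rfl | hzy
  · simp
  linarith [gadgetDist_add_two_mul_le (K := K) (A := A) hxy hzy,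
    distToCenter_nonneg (K := K) (A := A) y]

end GadgetMetric

section Tour

variable {n K : ℕ} {A : Fin n → ℕ} {N : ℕ} {node : Fin (N + 1) → GadgetNode n}
  {time : Fin (N + 1) → ℝ}

def ServesGadgetRequests (K : ℕ) (node : Fin (N + 1) → GadgetNode n) (time : Fin (N + 1) → ℝ) :
    Prop :=
  (∃ k, node k = GadgetNode.s ∧ time k ∈ Set.Icc (0 : ℝ) (6 * K)) ∧
  (∃ k, node k = GadgetNode.t ∧ time k ∈ Set.Icc (12 * (K : ℝ)) (18 * K)) ∧
  (∃ k, node k = GadgetNode.u ∧ time k ∈ Set.Icc (6 * (K : ℝ)) (12 * K)) ∧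
  (∀ i : Fin n, ∃ k, node k = GadgetNode.leaf i ∧
    time k ∈ Set.Icc (6 * (K : ℝ)) (12 * K)) ∧
  (∃ k, node k = GadgetNode.v ∧ time k ∈ Set.Icc (3 * (K : ℝ)) (9 * K)) ∧
  (∃ k, node k = GadgetNode.v ∧ time k ∈ Set.Icc (9 * (K : ℝ)) (15 * K))

theorem IsTimedWalk.gadgetDist_le (hwalk : IsTimedWalk (gadgetDist K A) node time)
    {j k : Fin (N + 1)} (hjk : j ≤ k) : gadgetDist K A (node j) (node k) ≤ time k - time j :=
  hwalk.dist_le gadgetDist_self gadgetDist_triangle hjk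

theorem IsTimedWalk.lt_of_sub_lt_distToCenter_add
    (hwalk : IsTimedWalk (gadgetDist K A) node time) {j k : Fin (N + 1)} (hne : node k ≠ node j)
    (h : time j - time k < distToCenter K A (node k) + distToCenter K A (node j)) : j < k := by
  by_contra! hkj
  exact (gadgetDist_of_ne hne ▸ hwalk.gadgetDist_le hkj).not_gt h

theorem IsTimedWalk.distToCenter_add_two_mul_sum_le
    (hwalk : IsTimedWalk (gadgetDist K A) node time) {visit : Fin n → Fin (N + 1)}
    (hvisit : ∀ i, node (visit i) = .leaf i) (S : Finset (Fin n)) {j k : Fin (N + 1)}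
    (hjk : j ≤ k) (hS : ∀ i ∈ S, j < visit i ∧ visit i < k)
    (hj : ∀ i ∈ S, node j ≠ .leaf i) (hk : ∀ i ∈ S, node k ≠ .leaf i)
    (hne : S.Nonempty ∨ node j ≠ node k) :
    distToCenter K A (node j) + distToCenter K A (node k) + 2 * ∑ i ∈ S, (A i : ℝ) ≤
      time k - time j := by
  induction S using Finset.induction_on_max_value visit generalizing k with
  | empty =>
    have hne : node j ≠ node k := by simpa using hne
    simpa [← gadgetDist_of_ne hne] using hwalk.gadgetDist_le hjk
  | insert i S hiS hmax ih =>
    have hvisit_lt : ∀ i' ∈ S, visit i' < visit i := fun i' hi' =>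
      (hmax i' hi').lt_of_ne fun h => ne_of_mem_of_not_mem hi' hiS
        (GadgetNode.leaf.inj (by rw [← hvisit, h, hvisit]))
    have hbefore := ih (hS i (S.mem_insert_self i)).1.le
      (fun i' hi' => ⟨(hS i' (S.mem_insert_of_mem hi')).1, hvisit_lt i' hi'⟩)
      (fun i' hi' => hj i' (S.mem_insert_of_mem hi'))
      (fun i' hi' => by
        rw [hvisit]; exact fun h => ne_of_mem_of_not_mem hi' hiS (GadgetNode.leaf.inj h).symm)
      (.inr (by rw [hvisit]; exact hj i (S.mem_insert_self i)))
    have hafter := hwalk.gadgetDist_le (hS i (S.mem_insert_self i)).2.le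
    rw [hvisit, gadgetDist_of_ne (hk i (S.mem_insert_self i)).symm] at hafter
    rw [hvisit] at hbefore
    rw [Finset.sum_insert hiS]
    change _ + (A i : ℝ) + _ ≤ _ at hbefore
    change (A i : ℝ) + _ ≤ _ at hafter
    linarith

theorem IsTimedWalk.exists_ordered_visits (hwalk : IsTimedWalk (gadgetDist K A) node time)
    {x : GadgetNode n} {p q r : ℝ} (h₁ : ∃ k, node k = x ∧ time k ∈ Set.Icc p q)
    (h₂ : ∃ k, node k = x ∧ time k ∈ Set.Icc q r) :
    ∃ a b, a ≤ b ∧ node a = x ∧ node b = x ∧ time a ∈ Set.Icc p q ∧ time b ∈ Set.Icc q r := by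
  obtain ⟨k₁, hk₁, hp₁, hq₁⟩ := h₁
  obtain ⟨k₂, hk₂, hq₂, hr₂⟩ := h₂
  rcases le_total k₁ k₂ with h | h
  · exact ⟨k₁, k₂, h, hk₁, hk₂, ⟨hp₁, hq₁⟩, ⟨hq₂, hr₂⟩⟩
  · have := (gadgetDist_nonneg _ _).trans (hwalk.gadgetDist_le h)
    exact ⟨k₂, k₁, h, hk₂, hk₁, ⟨by linarith, by linarith⟩, ⟨by linarith, by linarith⟩⟩

theorem IsTimedWalk.exists_sum_eq_of_travel_time_le
    (hwalk : IsTimedWalk (gadgetDist K A) node time) (hK : 0 < K) (hsum : ∑ i, A i = 2 * K)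
    {visit : Fin n → Fin (N + 1)} (hvisit : ∀ i, node (visit i) = .leaf i)
    {ks a b kt : Fin (N + 1)} (hks : node ks = .s) (ha : node a = .v) (hb : node b = .v)
    (hkt : node kt = .t) (hs_a : ks < a) (hab : a ≤ b) (hb_t : b < kt)
    (hs_visit : ∀ i, ks < visit i) (hvisit_t : ∀ i, visit i < kt)
    (hfirst : time a - time ks ≤ 9 * K) (hlast : time kt - time b ≤ 9 * K)
    (htotal : time kt - time ks ≤ 18 * K) :
    ∃ P : Finset (Fin n), ∑ i ∈ P, A i = K := by
  have hK' : (0 : ℝ) < K := by exact_mod_cast hK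
  have hvisit_ne : ∀ i k, node k ≠ .leaf i → visit i ≠ k := fun i k h e => h (e ▸ hvisit i)
  set P := Finset.univ.filter fun i => visit i < a
  have hnotP : ∀ i ∉ P, a ≤ visit i := fun i hi => not_lt.1 fun h => hi (by simp [P, h])
  set M := Pᶜ.filter fun i => visit i < b
  set Q := Pᶜ.filter fun i => ¬ visit i < b
  have hsplit : ∑ i ∈ P, (A i : ℝ) + ∑ i ∈ M, (A i : ℝ) + ∑ i ∈ Q, (A i : ℝ) = 2 * K := by
    rw [add_assoc, Finset.sum_filter_add_sum_filter_not, Finset.sum_add_sum_compl]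
    exact_mod_cast hsum
  have hP := hwalk.distToCenter_add_two_mul_sum_le hvisit P hs_a.le
    (fun i hi => ⟨hs_visit i, (Finset.mem_filter.1 hi).2⟩) (by simp [hks]) (by simp [ha])
    (.inr (by simp [hks, ha]))
  have hQ := hwalk.distToCenter_add_two_mul_sum_le hvisit Q hb_t.le
    (fun i hi => ⟨(not_lt.1 (Finset.mem_filter.1 hi).2).lt_of_ne' (hvisit_ne i b (by simp [hb])),
      hvisit_t i⟩) (by simp [hb]) (by simp [hkt])
    (.inr (by simp [hkt, hb]))
  simp only [hks, ha, hb, hkt, distToCenter] at hP hQ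
  have hM : ∑ i ∈ M, (A i : ℝ) = 0 := by
    rcases M.eq_empty_or_nonempty with hM | hM
    · simp [hM]
    have := hwalk.distToCenter_add_two_mul_sum_le hvisit M hab
      (fun i hi => ⟨(hnotP i (Finset.mem_compl.1 (Finset.mem_filter.1 hi).1)).lt_of_ne'
        (hvisit_ne i a (by simp [ha])), (Finset.mem_filter.1 hi).2⟩)
      (by simp [ha]) (by simp [hb]) (.inl hM)
    simp only [ha, hb, distToCenter] at this
    linarith
  exact ⟨P, by exact_mod_cast (by linarith : ∑ i ∈ P, (A i : ℝ) = K)⟩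

theorem exists_sum_eq_of_servesGadgetRequests (hK : 0 < K) (hsum : ∑ i, A i = 2 * K)
    (hwalk : IsTimedWalk (gadgetDist K A) node time) (hserve : ServesGadgetRequests K node time) :
    ∃ P : Finset (Fin n), ∑ i ∈ P, A i = K := by
  obtain ⟨⟨ks, hks, hks₀, hks₆⟩, ⟨kt, hkt, hkt₁₂, hkt₁₈⟩, -, hleaf, hv₁, hv₂⟩ := hserve
  choose visit hvisit hvisit_time using hleaf
  obtain ⟨a, b, hab, ha, hb, ⟨ha₃, ha₉⟩, ⟨hb₉, hb₁₅⟩⟩ := hwalk.exists_ordered_visits hv₁ hv₂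
  have hK' : (0 : ℝ) < K := by exact_mod_cast hK
  refine hwalk.exists_sum_eq_of_travel_time_le hK hsum hvisit hks ha hb hkt ?_ hab ?_ (fun i => ?_)
    (fun i => ?_) (by linarith) (by linarith) (by linarith)
  · exact hwalk.lt_of_sub_lt_distToCenter_add (by simp [hks, ha])
      (by simp only [hks, ha, distToCenter]; linarith)
  · exact hwalk.lt_of_sub_lt_distToCenter_add (by simp [hkt, hb])
      (by simp only [hkt, hb, distToCenter]; linarith)
  · exact hwalk.lt_of_sub_lt_distToCenter_add (by simp [hks, hvisit])
      (by simp only [hks, hvisit, distToCenter]; linarith [(hvisit_time i).1])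
  · exact hwalk.lt_of_sub_lt_distToCenter_add (by simp [hkt, hvisit])
      (by simp only [hkt, hvisit, distToCenter]; linarith [(hvisit_time i).2])

end Tour

section Backward

variable {n K : ℕ} {A : Fin n → ℕ}

def leafWalk (A : Fin n → ℕ) : ℝ → List (Fin n) → List (GadgetNode n × ℝ)
  | _, [] => []
  | t₀, i :: l => (.leaf i, t₀ + A i) :: (.u, t₀ + 2 * A i) :: leafWalk A (t₀ + 2 * A i) l

theorem isChain_leafWalk_append (l : List (Fin n)) (t₀ : ℝ) (rest : List (GadgetNode n × ℝ))
    (h : ((.u, t₀ + 2 * (l.map fun i => (A i : ℝ)).sum) :: rest).IsChain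
      (TimedStep (gadgetDist K A))) :
    ((.u, t₀) :: (leafWalk A t₀ l ++ rest)).IsChain (TimedStep (gadgetDist K A)) := by
  induction l generalizing t₀ with
  | nil => simpa [leafWalk] using h
  | cons i l ih =>
    have h' := ih (t₀ + 2 * A i) (by
      rwa [add_assoc, ← mul_add, ← List.sum_cons])
    refine List.isChain_cons_cons.2 ⟨?_, List.isChain_cons_cons.2 ⟨?_, h'⟩⟩
    · simp [TimedStep, gadgetDist, distToCenter]
    · simp [TimedStep, gadgetDist, distToCenter, two_mul]

theorem exists_mem_leafWalk {l : List (Fin n)} {i : Fin n} (hi : i ∈ l) (t₀ : ℝ) :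
    ∃ c ∈ Set.Icc t₀ (t₀ + 2 * (l.map fun i => (A i : ℝ)).sum),
      (.leaf i, c) ∈ leafWalk A t₀ l := by
  induction l generalizing t₀ with
  | nil => simp at hi
  | cons j l ih =>
    have hsum_nonneg : 0 ≤ (l.map fun i => (A i : ℝ)).sum :=
      List.sum_nonneg (by simp)
    rcases List.mem_cons.1 hi with rfl | hi
    · exact ⟨t₀ + A i, ⟨by simp, by simp only [List.map_cons, List.sum_cons]; linarith⟩,
        by simp [leafWalk]⟩
    · obtain ⟨c, ⟨hc₁, hc₂⟩, hc⟩ := ih hi (t₀ + 2 * A j)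
      exact ⟨c, ⟨by linarith [(A j).cast_nonneg (α := ℝ)],
        by simp only [List.map_cons, List.sum_cons]; linarith⟩,
        by simp [leafWalk, hc]⟩

theorem exists_servesGadgetRequests_of_sum_eq (hsum : ∑ i, A i = 2 * K) {P : Finset (Fin n)}
    (hP : ∑ i ∈ P, A i = K) :
    ∃ (N : ℕ) (node : Fin (N + 1) → GadgetNode n) (time : Fin (N + 1) → ℝ),
      IsTimedWalk (gadgetDist K A) node time ∧ ServesGadgetRequests K node time := by
  have hP' : (P.toList.map fun i => (A i : ℝ)).sum = K := by
    rw [Finset.sum_map_toList]; exact_mod_cast hP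
  have hPc : (Pᶜ.toList.map fun i => (A i : ℝ)).sum = K := by
    rw [Finset.sum_map_toList]
    have := Finset.sum_add_sum_compl P A
    exact_mod_cast (by omega : ∑ i ∈ Pᶜ, A i = K)
  have hK₀ := K.cast_nonneg (α := ℝ)
  set tour : List (GadgetNode n × ℝ) :=
    (.s, 0) :: (.u, 6 * (K : ℝ)) :: (leafWalk A (6 * K) P.toList ++
      (.v, 9 * (K : ℝ)) :: (.u, 10 * (K : ℝ)) ::
        (leafWalk A (10 * K) Pᶜ.toList ++ [(.t, 18 * (K : ℝ))]))
  have hchain : tour.IsChain (TimedStep (gadgetDist K A)) := by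
    refine List.isChain_cons_cons.2 ⟨by simp [TimedStep, gadgetDist, distToCenter], ?_⟩
    refine isChain_leafWalk_append _ _ _ (List.isChain_cons_cons.2 ⟨?_,
      List.isChain_cons_cons.2 ⟨?_, isChain_leafWalk_append _ _ _ ?_⟩⟩)
    · simp only [TimedStep, gadgetDist, reduceCtorEq, ↓reduceIte, distToCenter, zero_add, hP']
      linarith
    · simp only [TimedStep, gadgetDist, reduceCtorEq, ↓reduceIte, distToCenter, add_zero]
      linarith
    · refine List.isChain_pair.2 ?_
      simp only [TimedStep, gadgetDist, reduceCtorEq, ↓reduceIte, distToCenter, zero_add, hPc]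
      linarith
  obtain ⟨N, node, time, hwalk, hmem⟩ := exists_isTimedWalk_of_isChain (by simp [tour]) hchain
  have serve : ∀ x c, (x, c) ∈ tour → ∀ {lo hi : ℝ}, lo ≤ c → c ≤ hi →
      ∃ k, node k = x ∧ time k ∈ Set.Icc lo hi := fun x c h _ _ hlo hhi =>
    let ⟨k, hk, hk'⟩ := hmem _ h; ⟨k, hk, hk' ▸ ⟨hlo, hhi⟩⟩
  refine ⟨N, node, time, hwalk, serve _ _ (by simp [tour]) le_rfl (by linarith),
    serve _ _ (by simp [tour]) (by linarith) le_rfl,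
    serve _ _ (by simp [tour]) le_rfl (by linarith),
    fun i => ?_, serve _ _ (by simp [tour]) (by linarith) le_rfl,
    serve _ _ (by simp [tour]) le_rfl (by linarith)⟩
  by_cases hi : i ∈ P
  · obtain ⟨c, ⟨hc₁, hc₂⟩, hc⟩ := exists_mem_leafWalk (A := A) (P.mem_toList.2 hi) (6 * K)
    exact serve _ c (by simp [tour, hc]) hc₁ (by linarith)
  · obtain ⟨c, ⟨hc₁, hc₂⟩, hc⟩ :=
      exists_mem_leafWalk (A := A) (Pᶜ.mem_toList.2 (Finset.mem_compl.2 hi)) (10 * K)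
    exact serve _ c (by simp [tour, hc]) (by linarith) (by linarith)

end Backward

theorem stmt17_general (n : ℕ) (K : ℕ) (hK : 0 < K) (A : Fin n → ℕ)
    (hsum : ∑ i, A i = 2 * K) :
    (∃ (N : ℕ) (node : Fin (N + 1) → GadgetNode n) (time : Fin (N + 1) → ℝ),
      (∀ k : Fin N, gadgetDist K A (node k.castSucc) (node k.succ) ≤
        time k.succ - time k.castSucc) ∧
      (∃ k, node k = GadgetNode.s ∧ time k ∈ Set.Icc (0 : ℝ) (6 * K)) ∧
      (∃ k, node k = GadgetNode.t ∧ time k ∈ Set.Icc (12 * (K : ℝ)) (18 * K)) ∧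
      (∃ k, node k = GadgetNode.u ∧ time k ∈ Set.Icc (6 * (K : ℝ)) (12 * K)) ∧
      (∀ i : Fin n, ∃ k, node k = GadgetNode.leaf i ∧
        time k ∈ Set.Icc (6 * (K : ℝ)) (12 * K)) ∧
      (∃ k, node k = GadgetNode.v ∧ time k ∈ Set.Icc (3 * (K : ℝ)) (9 * K)) ∧
      (∃ k, node k = GadgetNode.v ∧ time k ∈ Set.Icc (9 * (K : ℝ)) (15 * K))) ↔
    (∃ P : Finset (Fin n), ∑ i ∈ P, A i = K) :=
  ⟨fun ⟨_, _, _, hwalk, hserve⟩ => exists_sum_eq_of_servesGadgetRequests hK hsum hwalk hserve,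
    fun ⟨_, hP⟩ => exists_servesGadgetRequests_of_sum_eq hsum hP⟩

/-- NP-hardness gadget correctness: in the tree built from a multiset `A` of positive
integers summing to `2K` — with requests at `s` on window `[0,6K]`, at `t` on
`[12K,18K]`, at `u` and every leaf on `[6K,12K]`, and at `v` on both `[3K,9K]` and
`[9K,15K]` — there is a unit-speed tour (a finite schedule of node visits whose
consecutive travel times are at least the tree distances) servicing every request
within its window if and only if `A` can be partitioned into two sub-multisets each
summing to `K`. -/
theorem stmt17 (n : ℕ) (K : ℕ) (hK : 0 < K) (A : Fin n → ℕ) (hA : ∀ i, 0 < A i)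
    (hsum : ∑ i, A i = 2 * K) :
    (∃ (N : ℕ) (node : Fin (N + 1) → GadgetNode n) (time : Fin (N + 1) → ℝ),
      (∀ k : Fin N, gadgetDist K A (node k.castSucc) (node k.succ) ≤
        time k.succ - time k.castSucc) ∧
      (∃ k, node k = GadgetNode.s ∧ time k ∈ Set.Icc (0 : ℝ) (6 * K)) ∧
      (∃ k, node k = GadgetNode.t ∧ time k ∈ Set.Icc (12 * (K : ℝ)) (18 * K)) ∧
      (∃ k, node k = GadgetNode.u ∧ time k ∈ Set.Icc (6 * (K : ℝ)) (12 * K)) ∧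
      (∀ i : Fin n, ∃ k, node k = GadgetNode.leaf i ∧
        time k ∈ Set.Icc (6 * (K : ℝ)) (12 * K)) ∧
      (∃ k, node k = GadgetNode.v ∧ time k ∈ Set.Icc (3 * (K : ℝ)) (9 * K)) ∧
      (∃ k, node k = GadgetNode.v ∧ time k ∈ Set.Icc (9 * (K : ℝ)) (15 * K))) ↔
    (∃ P : Finset (Fin n), ∑ i ∈ P, A i = K) :=
  stmt17_general n K hK A hsum
end

section
/- (Service-time reduction preserves window structure) Given a request with window [t, t+1) at node x and a uniform service time μ with 0 < μ < 1, create a new node x' joined to x by an edge requiring μ/2 time to cross, and replace the request by a request at x' with window [t + μ/2, t + 1 − μ/2). Then: (a) visiting x' within its new window at unit speed forces presence at x within [t, t+1−μ) followed by a delay of at least μ before any other node can be reached; and (b) the new window has length exactly 1 − μ, so all transformed windows are uniform if all originals were. -/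
/-!
A unit-speed tour needs time at least `dist a b` to get from `a` to `b`. Since every node
other than `x'` is reached from `x'` only through `x`, a node `y` visited at time `ρ` satisfies
`μ/2 + dist y x ≤ |ρ - τ|`; at `ρ = τ - μ/2` this forces `dist y x = 0`.
-/

section PendantNode

variable {M : Type*} {f : ℝ → M} {x x' y : M} {r ρ τ : ℝ}

theorem LipschitzWith.dist_le_abs_sub [PseudoMetricSpace M] (hf : LipschitzWith 1 f)
    (a b : ℝ) : dist (f a) (f b) ≤ |a - b| := by
  simpa [Real.dist_eq] using hf.dist_le_mul a b

theorem add_dist_le_abs_sub_of_pendant [PseudoMetricSpace M] (hf : LipschitzWith 1 f)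
    (hvisit : f τ = x') (hy : dist y x' = r + dist y x) (hρ : f ρ = y) :
    r + dist y x ≤ |ρ - τ| := by
  simpa [hρ, hvisit, hy] using hf.dist_le_abs_sub ρ τ

theorem eq_of_pendant_of_abs_sub_le [MetricSpace M] (hf : LipschitzWith 1 f)
    (hvisit : f τ = x') (hy : dist y x' = r + dist y x) (hρ : f ρ = y)
    (hρτ : |ρ - τ| ≤ r) : y = x :=
  dist_le_zero.1 (by linarith [add_dist_le_abs_sub_of_pendant hf hvisit hy hρ])

end PendantNode

theorem stmt18_general {M : Type*} [MetricSpace M] (Nd : Set M) (x x' : M) (μ t : ℝ)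
    (hμ0 : 0 < μ)
    (hsep : ∀ y ∈ Nd, y ≠ x' → dist y x' = μ / 2 + dist y x)
    (f : ℝ → M) (hf : LipschitzWith 1 f)
    (τ : ℝ) (hτ : τ ∈ Set.Ico (t + μ / 2) (t + 1 - μ / 2)) (hvisit : f τ = x') :
    (τ - μ / 2 ∈ Set.Ico t (t + 1 - μ)) ∧
    (∀ y ∈ Nd, f (τ - μ / 2) = y → y = x ∨ y = x') ∧
    (∀ ρ : ℝ, ∀ y ∈ Nd, f ρ = y → y ≠ x → y ≠ x' → μ / 2 + dist y x ≤ |ρ - τ|) ∧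
    ((t + 1 - μ / 2) - (t + μ / 2) = 1 - μ) := by
  refine ⟨?_, ?_, ?_, by ring⟩
  · have hend : t + 1 - μ + μ / 2 = t + 1 - μ / 2 := by ring
    rwa [Set.sub_mem_Ico_iff_left, hend]
  · intro y hy hfy
    by_cases hyx' : y = x'
    · exact Or.inr hyx'
    · have hlag : |τ - μ / 2 - τ| ≤ μ / 2 := by
        rw [sub_sub_cancel_left, abs_neg, abs_of_pos (half_pos hμ0)]
      exact Or.inl (eq_of_pendant_of_abs_sub_le hf hvisit (hsep y hy hyx') hfy hlag)
  · intro ρ y hy hfy _ hyx'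
    exact add_dist_le_abs_sub_of_pendant hf hvisit (hsep y hy hyx') hfy

/-- Service-time reduction preserves window structure.  Let `Nd` be the set of nodes in
the metric, `x' ∈ Nd` a degree-1 node attached to `x ∈ Nd` by an edge of traversal time
`μ/2`, so `dist x x' = μ/2` and every other node is reached from `x'` through `x`
(`dist y x' = μ/2 + dist y x`).  If a unit-speed tour `f` (a `1`-Lipschitz map) visits
`x'` at a time `τ` inside the new window `[t+μ/2, t+1−μ/2)`, then:
(a) the forced presence time `τ − μ/2` at `x` lies in `[t, t+1−μ)`, the tour is at `x`
or `x'` (if at any node) at time `τ − μ/2`, and reaching any node other than `x` and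
`x'` requires a delay of at least `μ/2 + dist(y,x)` from `τ` (hence a total delay of at
least `μ` around the visit, centered at the visit to `x'`); and
(b) the new window has length exactly `1 − μ`. -/
theorem stmt18 {M : Type*} [MetricSpace M] (Nd : Set M) (x x' : M) (μ t : ℝ)
    (hμ0 : 0 < μ) (hμ1 : μ < 1) (hx : x ∈ Nd) (hx' : x' ∈ Nd)
    (hxx' : dist x x' = μ / 2)
    (hsep : ∀ y ∈ Nd, y ≠ x' → dist y x' = μ / 2 + dist y x)
    (f : ℝ → M) (hf : LipschitzWith 1 f)
    (τ : ℝ) (hτ : τ ∈ Set.Ico (t + μ / 2) (t + 1 - μ / 2)) (hvisit : f τ = x') :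
    (τ - μ / 2 ∈ Set.Ico t (t + 1 - μ)) ∧
    (∀ y ∈ Nd, f (τ - μ / 2) = y → y = x ∨ y = x') ∧
    (∀ ρ : ℝ, ∀ y ∈ Nd, f ρ = y → y ≠ x → y ≠ x' → μ / 2 + dist y x ≤ |ρ - τ|) ∧
    ((t + 1 - μ / 2) - (t + μ / 2) = 1 - μ) :=
  stmt18_general Nd x x' μ t hμ0 hsep f hf τ hτ hvisit
end
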